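/- arXiv:1510.05984 — 9 statements merged into one kernel-verified Lean document; each statement's English description precedes it below -/
import Mathlib

section
/- If T ⊆ ℕ* (positive integers) is such that for every ring R the set R[[x^T]] of formal power series supported on exponents in T is closed under composition and contains x, then 1 ∈ T and T is closed under multiplication (i.e., T is a submonoid of (ℕ*, ·)). -/
open PowerSeries

/-- Composition of formal power series (the genuine composition when `g` has zero
constant term): the `n`-th coefficient of `f ∘ g`. -/
noncomputable def comp {R : Type*} [CommRing R] (f g : PowerSeries R) : PowerSeries R :=
  PowerSeries.mk fun n =>
    ∑ k ∈ Finset.range (n + 1), (PowerSeries.coeff k f) * (PowerSeries.coeff n (g ^ k))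

/-- `f` is supported on exponents in `T`. -/
def Supported {R : Type*} [CommRing R] (T : Set ℕ) (f : PowerSeries R) : Prop :=
  ∀ n, PowerSeries.coeff n f ≠ 0 → n ∈ T

theorem stmt0 (T : Set ℕ) (hpos : ∀ t ∈ T, 0 < t)
    (h : ∀ (R : Type) [CommRing R],
      Supported (R := R) T PowerSeries.X ∧
      ∀ f g : PowerSeries R, Supported T f → Supported T g → Supported T (comp f g)) :
    1 ∈ T ∧ ∀ s ∈ T, ∀ t ∈ T, s * t ∈ T := by
  obtain ⟨hX, hcomp⟩ := h ℤ
  have h1 : (1 : ℕ) ∈ T := hX 1 (by simp)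
  refine ⟨h1, ?_⟩
  intro s hs t ht
  have hspos := hpos s hs
  have htpos := hpos t ht
  have hxp : ∀ m : ℕ, m ∈ T → Supported (R := ℤ) T ((X : PowerSeries ℤ) ^ m) := by
    intro m hm n hn
    rw [PowerSeries.coeff_X_pow] at hn
    split_ifs at hn with hnm
    · exact hnm ▸ hm
    · exact absurd rfl hn
  have hsum : (PowerSeries.coeff (s * t)) (comp ((X : PowerSeries ℤ) ^ s) (X ^ t)) = 1 := by
    simp only [comp, PowerSeries.coeff_mk, ← pow_mul, PowerSeries.coeff_X_pow]
    rw [Finset.sum_eq_single s]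
    · simp [Nat.mul_comm]
    · intro b _ hb; simp [hb]
    · intro hns
      exact absurd (Finset.mem_range.mpr (by nlinarith)) hns
  exact hcomp _ _ (hxp s hs) (hxp t ht) (s * t) (by rw [hsum]; exact one_ne_zero)
end

section
/- Let T ⊆ ℕ*. Then the following are equivalent: (b) 1 ∈ T, and whenever s, t₁, ..., t_k ∈ T and s = s₁ + ... + s_k is a partition of s into positive integers, then s₁t₁ + ... + s_kt_k ∈ T; (c) 1 ∈ T and for all s, t ∈ T, s + t − 1 ∈ T. -/
theorem stmt2 (T : Set ℕ) (hpos : ∀ t ∈ T, 0 < t) :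
    (1 ∈ T ∧ ∀ (k : ℕ) (s t : Fin k → ℕ), 0 < k → (∀ i, 0 < s i) → (∀ i, t i ∈ T) →
        (∑ i, s i) ∈ T → (∑ i, s i * t i) ∈ T) ↔
    (1 ∈ T ∧ ∀ s ∈ T, ∀ t ∈ T, s + t - 1 ∈ T) := by
  constructor
  · rintro ⟨h1, hb⟩
    refine ⟨h1, fun s hs t ht => ?_⟩
    obtain ⟨m, rfl⟩ : ∃ m, s = m + 1 := ⟨s - 1, (Nat.succ_pred_eq_of_pos (hpos s hs)).symm⟩
    have := hb (m + 1) (fun _ => 1) (Fin.cons (α := fun _ => ℕ) t (fun _ => 1)) (Nat.succ_pos m)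
      (fun _ => one_pos)
      (fun i => by
        refine Fin.cases ?_ ?_ i
        · simpa using ht
        · intro j; simpa using h1)
      (by simpa using hs)
    have hsum : (∑ i : Fin (m + 1), (fun _ => 1 : Fin (m+1) → ℕ) i *
        Fin.cons (α := fun _ => ℕ) t (fun _ => 1) i) = t + m := by
      rw [Fin.sum_univ_succ]
      simp
    rw [hsum] at this
    have : m + 1 + t - 1 = t + m := by omega
    rw [this]
    assumption
  · rintro ⟨h1, hc⟩
    refine ⟨h1, fun k s t hk hspos ht hsum => ?_⟩
    -- key lemma: x ∈ T, t ∈ T ⇒ x + n * (t - 1) ∈ T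
    have key : ∀ (n x u : ℕ), x ∈ T → u ∈ T → x + n * (u - 1) ∈ T := by
      intro n
      induction n with
      | zero => intro x u hx _; simpa using hx
      | succ n ih =>
        intro x u hx hu
        have h2 := hc _ (ih x u hx hu) u hu
        have hu1 := hpos u hu
        have hx1 := hpos x hx
        have : x + n * (u - 1) + u - 1 = x + (n + 1) * (u - 1) := by
          cases u with
          | zero => omega
          | succ v => simp [Nat.succ_sub_one]; ring
        rwa [this] at h2
    have main : ∀ (k : ℕ) (s t : Fin k → ℕ), (∀ i, t i ∈ T) → ∀ x ∈ T,
        x + ∑ i, s i * (t i - 1) ∈ T := by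
      intro k
      induction k with
      | zero => intro s t ht x hx; simpa using hx
      | succ n ih =>
        intro s t ht x hx
        rw [Fin.sum_univ_succ]
        have := ih (fun i => s i.succ) (fun i => t i.succ) (fun i => ht i.succ)
          (x + s 0 * (t 0 - 1)) (key (s 0) x (t 0) hx (ht 0))
        simpa [add_assoc] using this
    have heq : (∑ i, s i * t i) = (∑ i, s i) + ∑ i, s i * (t i - 1) := by
      rw [← Finset.sum_add_distrib]
      refine Finset.sum_congr rfl fun i _ => ?_
      have := hpos (t i) (ht i)
      cases h : t i with
      | zero => omega
      | succ v => simp [Nat.succ_sub_one]; ring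
    rw [heq]
    exact main k s t ht _ hsum
end

section
/- If T ⊆ ℕ* satisfies 1 ∈ T and s + t − 1 ∈ T for all s, t ∈ T (i.e., T is strongly closed), then for any commutative ring R, the set R[[x^T]] of formal power series with support in T is closed under composition and contains the identity x; hence it is a submonoid of (x·R[[x]], ∘). -/
open PowerSeries

lemma pow_supp {R : Type} [CommRing R] (T : Set ℕ) (hpos : ∀ t ∈ T, 0 < t)
    (hsc : ∀ s ∈ T, ∀ t ∈ T, s + t - 1 ∈ T)
    (g : PowerSeries R) (hg : Supported T g) :
    ∀ k n, 1 ≤ k → PowerSeries.coeff n (g ^ k) ≠ 0 → k ≤ n ∧ n + 1 - k ∈ T := by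
  intro k
  induction k with
  | zero => intro n h; omega
  | succ k ih =>
    intro n _ hne
    rcases Nat.eq_zero_or_pos k with hk | hk
    · subst hk
      simp only [zero_add, pow_one] at hne
      have := hg n hne
      exact ⟨hpos n this, by rwa [Nat.add_sub_cancel]⟩
    · rw [pow_succ, PowerSeries.coeff_mul] at hne
      obtain ⟨p, hp, hne⟩ := Finset.exists_ne_zero_of_sum_ne_zero hne
      rw [Finset.HasAntidiagonal.mem_antidiagonal] at hp
      have h1 : PowerSeries.coeff p.1 (g ^ k) ≠ 0 := fun h => hne (by rw [h, zero_mul])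
      have h2 : p.2 ∈ T := hg p.2 fun h => hne (by rw [h, mul_zero])
      obtain ⟨hle, hT⟩ := ih p.1 hk h1
      have hp2 : 0 < p.2 := hpos _ h2
      have := hsc _ hT _ h2
      constructor
      · omega
      · have heq : p.1 + 1 - k + p.2 - 1 = n + 1 - (k + 1) := by omega
        exact heq ▸ hsc _ hT _ h2

theorem stmt3 (T : Set ℕ) (hpos : ∀ t ∈ T, 0 < t) (h1 : 1 ∈ T)
    (hsc : ∀ s ∈ T, ∀ t ∈ T, s + t - 1 ∈ T)
    (R : Type) [CommRing R] :
    Supported (R := R) T PowerSeries.X ∧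
    ∀ f g : PowerSeries R, Supported T f → Supported T g → Supported T (comp f g) := by
  constructor
  · intro n hn
    rw [PowerSeries.coeff_X] at hn
    by_cases h : n = 1
    · exact h ▸ h1
    · simp [h] at hn
  · intro f g hf hg n hn
    rw [comp, PowerSeries.coeff_mk] at hn
    obtain ⟨k, hk, hne⟩ := Finset.exists_ne_zero_of_sum_ne_zero hn
    have hfk : k ∈ T := hf k fun h => hne (by rw [h, zero_mul])
    have hgk : PowerSeries.coeff n (g ^ k) ≠ 0 := fun h => hne (by rw [h, mul_zero])
    obtain ⟨hle, hT⟩ := pow_supp T hpos hsc g hg k n (hpos k hfk) hgk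
    have heq : n + 1 - k + k - 1 = n := by omega
    have := hsc _ hT _ hfk
    rwa [heq] at this
end

section
/- If for every ring R (equivalently, for R = ℤ) the set R[[x^T]] is a submonoid of (x·R[[x]], ∘), then T is strongly closed: 1 ∈ T and s + t − 1 ∈ T for all s, t ∈ T. -/
open PowerSeries

theorem stmt4 (T : Set ℕ) (hpos : ∀ t ∈ T, 0 < t)
    (h : ∀ (R : Type) [CommRing R],
      Supported (R := R) T PowerSeries.X ∧
      ∀ f g : PowerSeries R, Supported T f → Supported T g → Supported T (comp f g)) :
    1 ∈ T ∧ ∀ s ∈ T, ∀ t ∈ T, s + t - 1 ∈ T := by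
  obtain ⟨hX, hcomp⟩ := h ℤ
  have h1 : (1 : ℕ) ∈ T := hX 1 (by simp)
  refine ⟨h1, fun s hs t ht => ?_⟩
  have hs1 : 1 ≤ s := hpos s hs
  have ht1 : 1 ≤ t := hpos t ht
  have hf : Supported T ((X : PowerSeries ℤ) ^ s) := by
    intro n hn
    rw [coeff_X_pow] at hn
    by_cases hns : n = s
    · exact hns ▸ hs
    · simp [hns] at hn
  have hg : Supported T ((X : PowerSeries ℤ) + X ^ t) := by
    intro n hn
    rw [map_add, coeff_X, coeff_X_pow] at hn
    by_cases hn1 : n = 1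
    · exact hn1 ▸ h1
    · by_cases hnt : n = t
      · exact hnt ▸ ht
      · simp [hn1, hnt] at hn
  have key : PowerSeries.coeff (s + t - 1)
      (comp ((X : PowerSeries ℤ) ^ s) (X + X ^ t)) ≠ 0 := by
    have hsle : s ≤ s + t - 1 := by omega
    have e1 : PowerSeries.coeff (s + t - 1)
        (comp ((X : PowerSeries ℤ) ^ s) (X + X ^ t))
        = PowerSeries.coeff (s + t - 1) (((X : PowerSeries ℤ) + X ^ t) ^ s) := by
      rw [comp, coeff_mk]
      rw [Finset.sum_eq_single s]
      · rw [coeff_X_pow, if_pos rfl, one_mul]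
      · intro k _ hk
        rw [coeff_X_pow, if_neg hk, zero_mul]
      · intro hsnot
        exact absurd (Finset.mem_range.mpr (by omega)) hsnot
    rw [e1, add_pow, map_sum]
    simp only [← pow_mul, ← pow_add, ← map_natCast (C (R := ℤ)), coeff_mul_C, coeff_X_pow,
      ite_mul, one_mul, zero_mul]
    have hpos' : (0 : ℤ) < ∑ j ∈ Finset.range (s + 1),
        if s + t - 1 = j + t * (s - j) then ((s.choose j : ℤ)) else 0 := by
      apply Finset.sum_pos'
      · intro i _
        split
        · positivity
        · exact le_refl _
      · refine ⟨s - 1, Finset.mem_range.mpr (by omega), ?_⟩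
        have hcond : s + t - 1 = (s - 1) + t * (s - (s - 1)) := by
          have h2 : s - (s - 1) = 1 := by omega
          rw [h2]; omega
        rw [if_pos hcond]
        exact_mod_cast Nat.choose_pos (by omega : s - 1 ≤ s)
    exact ne_of_gt hpos'
  exact hcomp _ _ hf hg (s + t - 1) key
end

section
/- Every submonoid of (ℕ, +) is finitely generated. -/
theorem stmt10 (S : AddSubmonoid ℕ) : ∃ F : Finset ℕ, AddSubmonoid.closure (↑F : Set ℕ) = S := by
  by_cases hb : ∀ x ∈ S, x = 0
  · refine ⟨∅, le_antisymm ?_ ?_⟩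
    · simp
    · intro x hx
      rw [hb x hx]; exact zero_mem _
  · push_neg at hb
    obtain ⟨a, haS, ha0⟩ := hb
    have hapos : 0 < a := Nat.pos_of_ne_zero ha0
    classical
    -- for each residue r, least element of S with x % a = r (if exists)
    let g : ℕ → ℕ := fun r => if h : ∃ x, x ∈ S ∧ x % a = r then Nat.find h else 0
    refine ⟨insert a ((Finset.range a).image g), le_antisymm ?_ ?_⟩
    · rw [AddSubmonoid.closure_le]
      intro y hy
      simp only [Finset.coe_insert, Finset.coe_image, Set.mem_insert_iff] at hy
      rcases hy with rfl | ⟨r, _, rfl⟩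
      · exact haS
      · simp only [g]
        split
        · next h => exact (Nat.find_spec h).1
        · exact zero_mem _
    · intro x hx
      set r := x % a with hr
      have hex : ∃ y, y ∈ S ∧ y % a = r := ⟨x, hx, rfl⟩
      have hgS : g r ∈ S := by simp only [g, dif_pos hex]; exact (Nat.find_spec hex).1
      have hgmod : g r % a = r := by simp only [g, dif_pos hex]; exact (Nat.find_spec hex).2
      have hgle : g r ≤ x := by simp only [g, dif_pos hex]; exact Nat.find_min' hex ⟨hx, rfl⟩
      have hdvd : a ∣ x - g r := by
        have := (Nat.modEq_iff_dvd' hgle).mp (by rw [Nat.ModEq, hgmod])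
        exact this
      obtain ⟨k, hk⟩ := hdvd
      have hxeq : x = g r + k * a := by rw [mul_comm]; omega
      have hmem : g r ∈ (↑(insert a ((Finset.range a).image g)) : Set ℕ) := by
        simp only [Finset.coe_insert, Finset.coe_image, Set.mem_insert_iff]
        right
        exact ⟨r, by simp [hr, Nat.mod_lt _ hapos], rfl⟩
      have hamem : a ∈ (↑(insert a ((Finset.range a).image g)) : Set ℕ) := by simp
      rw [hxeq]
      refine add_mem (AddSubmonoid.subset_closure hmem) ?_
      have := AddSubmonoid.nsmul_mem _ (AddSubmonoid.subset_closure hamem) k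
      simpa [nsmul_eq_mul] using this
end

section
/- Let T ⊆ ℕ* be a strongly closed subset with T ≠ {1}. Then T, regarded as a multiplicative monoid, is not finitely generated: there is no finite subset of T generating T under multiplication. -/
/-- `T` is a strongly closed subset of the positive integers. -/
def StronglyClosed (T : Set ℕ) : Prop :=
  (∀ t ∈ T, 0 < t) ∧ 1 ∈ T ∧ ∀ s ∈ T, ∀ t ∈ T, s + t - 1 ∈ T

theorem stmt11 (T : Set ℕ) (hT : StronglyClosed T) (hne : T ≠ {1}) :
    ¬ ∃ F : Finset ℕ, (Submonoid.closure (↑F : Set ℕ) : Set ℕ) = T := by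
  obtain ⟨hpos, h1, hcl⟩ := hT
  -- pick a ∈ T with a > 1
  obtain ⟨a, haT, ha1⟩ : ∃ a ∈ T, 1 < a := by
    by_contra h
    push_neg at h
    apply hne
    ext x
    simp only [Set.mem_singleton_iff]
    constructor
    · intro hx
      have := hpos x hx
      have := h x hx
      omega
    · rintro rfl; exact h1
  set q := a - 1 with hq
  have hq0 : 0 < q := by omega
  haveI : NeZero q := ⟨by omega⟩
  -- a + k*q ∈ T for all k
  have hstep : ∀ k : ℕ, a + k * q ∈ T := by
    intro k
    induction k with
    | zero => simpa using haT
    | succ n ih =>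
      have := hcl _ ih _ haT
      have he : a + n * q + a - 1 = a + (n + 1) * q := by
        have : 1 ≤ a := by omega
        ring_nf
        omega
      rwa [he] at this
  -- infinitely many primes in T
  have hunit : IsUnit (1 : ZMod q) := isUnit_one
  have hinf : {p : ℕ | p.Prime ∧ (p : ZMod q) = 1}.Infinite :=
    Nat.infinite_setOfPred_prime_and_eq_mod hunit
  rintro ⟨F, hF⟩
  -- every prime p ≥ a with p ≡ 1 [mod q] is in T, hence in F
  have hprimeF : ∀ p : ℕ, p.Prime → a ≤ p → (p : ZMod q) = 1 → p ∈ F := by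
    intro p hp hap hmod
    have hdvd : q ∣ p - a := by
      have h1 : (p : ZMod q) = (a : ZMod q) := by
        rw [hmod]
        have haq : a = q + 1 := by omega
        rw [haq]
        push_cast
        rw [ZMod.natCast_self]
        ring
      have := (ZMod.natCast_eq_natCast_iff p a q).mp h1
      have := (Nat.modEq_iff_dvd' hap).mp this.symm
      exact this
    obtain ⟨k, hk⟩ := hdvd
    have hpT : p ∈ T := by
      have : p = a + k * q := by rw [mul_comm]; omega
      rw [this]
      exact hstep k
    -- p ∈ closure F, p prime ⇒ p ∈ F
    have hpc : p ∈ (Submonoid.closure (↑F : Set ℕ) : Set ℕ) := hF ▸ hpT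
    obtain ⟨l, hl, hlp⟩ := Submonoid.exists_list_of_mem_closure hpc
    obtain ⟨y, hy, hyd⟩ := (Prime.dvd_prod_iff (Nat.Prime.prime hp)).mp (dvd_of_eq hlp.symm)
    have hydvd : y ∣ p := hlp ▸ List.dvd_prod hy
    have hyp : y = p := by
      rcases Nat.Prime.eq_one_or_self_of_dvd hp y hydvd with h | h
      · subst h
        exact absurd (Nat.eq_one_of_dvd_one hyd) (Nat.Prime.ne_one hp)
      · exact h
    exact hyp ▸ hl y hy
  -- contradiction: infinitely many such primes in finite F
  have : {p : ℕ | p.Prime ∧ (p : ZMod q) = 1 ∧ a ≤ p}.Infinite := by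
    have : {p : ℕ | p.Prime ∧ (p : ZMod q) = 1 ∧ a ≤ p} =
        {p : ℕ | p.Prime ∧ (p : ZMod q) = 1} \ {p | p < a} := by
      ext p; simp [and_assoc, not_lt]
    rw [this]
    exact hinf.diff (Set.finite_Iio a)
  exact this (Set.Finite.subset F.finite_toSet fun p hp => hprimeF p hp.1 hp.2.2 hp.2.1)
end

section
/- Let n ≥ 2 and U ⊆ ℕⁿ \ {0} be such that R[[x^U]]ⁿ is a submonoid of (R[[x₁,...,xₙ]] with zero constant term)ⁿ under coordinatewise substitution composition for every ring R (it suffices to take R = ℤ). If u ∈ U and v ∈ ℕⁿ \ {0} with |v| = |u|, then v ∈ U. -/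
/-- Coordinatewise substitution composition of multivariate power series (the genuine
composition when each `g i` has zero constant term): coefficient of `f(g 1, ..., g n)`
at multidegree `d`. -/
noncomputable def mvComp {n : ℕ} {R : Type*} [CommRing R]
    (f : MvPowerSeries (Fin n) R) (g : Fin n → MvPowerSeries (Fin n) R) :
    MvPowerSeries (Fin n) R :=
  fun d =>
    ∑ e ∈ Finset.Iic (Finsupp.equivFunOnFinite.symm fun _ => d.sum fun _ m => m),
      (MvPowerSeries.coeff (R := R) e f) * MvPowerSeries.coeff (R := R) d (∏ i, (g i) ^ (e i))

/-- `f` is supported on monomials `x^u` with `u ∈ U`. -/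
def MvSupported {n : ℕ} {R : Type*} [CommRing R] (U : Set (Fin n →₀ ℕ))
    (f : MvPowerSeries (Fin n) R) : Prop :=
  ∀ d, MvPowerSeries.coeff (R := R) d f ≠ 0 → d ∈ U

lemma prod_monomial_one {σ R ι : Type*} [CommRing R] (s : Finset ι) (k : ι → (σ →₀ ℕ)) :
    (∏ j ∈ s, MvPowerSeries.monomial (R := R) (k j) (1 : R)) =
      MvPowerSeries.monomial (R := R) (∑ j ∈ s, k j) 1 := by
  classical
  induction s using Finset.induction with
  | empty => simp [MvPowerSeries.monomial_zero_one]
  | insert j s hj ih =>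
      rw [Finset.prod_insert hj, Finset.sum_insert hj, ih,
        MvPowerSeries.monomial_mul_monomial, one_mul]

lemma coeff_sumX_pow {n : ℕ} (v : Fin n →₀ ℕ) :
    MvPowerSeries.coeff (R := ℤ) v ((∑ j, MvPowerSeries.X j) ^ (v.sum fun _ m => m)) =
      (Nat.multinomial Finset.univ ⇑v : ℤ) := by
  classical
  have hfin : (v.sum fun _ m => m) = ∑ i, v i := Finsupp.sum_fintype _ _ (fun _ => rfl)
  have hmono : ∀ k : Fin n → ℕ, (∏ i, (MvPowerSeries.X i : MvPowerSeries (Fin n) ℤ) ^ k i) =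
      MvPowerSeries.monomial (R := ℤ) (∑ j, Finsupp.single j (k j)) 1 := by
    intro k
    simp_rw [MvPowerSeries.X_pow_eq]
    exact prod_monomial_one _ _
  have hsingle : ∀ k : Fin n → ℕ, (∑ j, Finsupp.single j (k j)) = v ↔ k = ⇑v := by
    intro k
    constructor
    · intro hk
      funext i
      have := DFunLike.congr_fun hk i
      simpa [Finsupp.single_apply, Finset.sum_ite_eq'] using this
    · intro hk
      subst hk
      ext i
      simp [Finsupp.single_apply, Finset.sum_ite_eq']
  rw [Finset.sum_pow_eq_sum_piAntidiag, map_sum]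
  rw [Finset.sum_eq_single (⇑v)]
  · rw [hmono, ← nsmul_eq_mul, map_nsmul, (hsingle ⇑v).2 rfl,
      MvPowerSeries.coeff_monomial_same, nsmul_eq_mul, mul_one]
  · intro k _ hk
    rw [hmono, ← nsmul_eq_mul, map_nsmul, MvPowerSeries.coeff_monomial_ne, smul_zero]
    intro hvk
    exact hk ((hsingle k).1 hvk.symm)
  · intro hv
    exact absurd (Finset.mem_piAntidiag.2 ⟨hfin.symm, fun i _ => Finset.mem_univ i⟩) hv

theorem stmt13 (n : ℕ) (hn : 2 ≤ n) (U : Set (Fin n →₀ ℕ)) (hU : ∀ u ∈ U, u ≠ 0)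
    (h : ∀ (R : Type) [CommRing R],
      (∀ i, MvSupported (R := R) U (MvPowerSeries.X i)) ∧
      ∀ f g : Fin n → MvPowerSeries (Fin n) R,
        (∀ i, MvSupported U (f i)) → (∀ i, MvSupported U (g i)) →
        ∀ i, MvSupported U (mvComp (f i) g)) :
    ∀ u ∈ U, ∀ v : Fin n →₀ ℕ, v ≠ 0 →
      (v.sum fun _ m => m) = (u.sum fun _ m => m) → v ∈ U := by
  classical
  intro u hu v hv hvu
  obtain ⟨hX, hcomp⟩ := h ℤ
  have hsingle : ∀ j : Fin n, Finsupp.single j 1 ∈ U := fun j =>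
    hX j (Finsupp.single j 1) (by simp [MvPowerSeries.coeff_X])
  have i0 : Fin n := ⟨0, by omega⟩
  set G : MvPowerSeries (Fin n) ℤ := ∑ j, MvPowerSeries.X j with hG
  have hf : ∀ i : Fin n, MvSupported U ((fun _ => MvPowerSeries.monomial (R := ℤ) u 1) i) := by
    intro i d hd
    rw [MvPowerSeries.coeff_monomial] at hd
    by_cases hdu : d = u
    · exact hdu ▸ hu
    · simp [hdu] at hd
  have hg : ∀ i : Fin n, MvSupported U ((fun _ => G) i) := by
    intro i d hd
    rw [hG, map_sum] at hd
    obtain ⟨j, -, hj⟩ := Finset.exists_ne_zero_of_sum_ne_zero hd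
    rw [MvPowerSeries.coeff_X] at hj
    by_cases hdj : d = Finsupp.single j 1
    · exact hdj ▸ hsingle j
    · simp [hdj] at hj
  have key := hcomp _ _ hf hg i0
  apply key v
  have hfinu : (u.sum fun _ m => m) = ∑ i, u i := Finsupp.sum_fintype _ _ (fun _ => rfl)
  have hval : MvPowerSeries.coeff (R := ℤ) v
      (mvComp (MvPowerSeries.monomial (R := ℤ) u 1) (fun _ => G)) =
      (Nat.multinomial Finset.univ ⇑v : ℤ) := by
    have hrfl : MvPowerSeries.coeff (R := ℤ) v
        (mvComp (MvPowerSeries.monomial (R := ℤ) u 1) (fun _ => G)) =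
        ∑ e ∈ Finset.Iic (Finsupp.equivFunOnFinite.symm fun _ => v.sum fun _ m => m),
          (MvPowerSeries.coeff (R := ℤ) e (MvPowerSeries.monomial (R := ℤ) u 1)) *
            MvPowerSeries.coeff (R := ℤ) v (∏ i, G ^ (e i)) := rfl
    rw [hrfl, Finset.sum_eq_single u]
    · rw [MvPowerSeries.coeff_monomial_same, one_mul, Finset.prod_pow_eq_pow_sum,
        ← hfinu, ← hvu]
      exact coeff_sumX_pow v
    · intro e _ he
      rw [MvPowerSeries.coeff_monomial_ne he, zero_mul]
    · intro hnot
      exfalso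
      apply hnot
      rw [Finset.mem_Iic, Finsupp.le_def]
      intro i
      have : u i ≤ ∑ j, u j := Finset.single_le_sum (fun j _ => Nat.zero_le _) (Finset.mem_univ i)
      simpa [hvu, hfinu] using this
  rw [hval]
  exact_mod_cast (Nat.multinomial_pos Finset.univ ⇑v).ne'
end

section
/- Let T ⊆ ℕ* be strongly closed and R a commutative ring. If f ∈ R[[x^T]] is invertible under composition (f has zero constant term and unit linear coefficient), then its compositional inverse f⁻¹ also lies in R[[x^T]]. Hence the invertible elements of R[[x^T]] form a group under composition. -/
open PowerSeries

-- lemma C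
lemma coeff_pow_lt_zero {R : Type*} [CommRing R] (f : PowerSeries R)
    (hf0 : PowerSeries.constantCoeff f = 0) (k a : ℕ) (ha : a < k) :
    PowerSeries.coeff a (f ^ k) = 0 := by
  have hdvd : (PowerSeries.X : PowerSeries R) ^ k ∣ f ^ k :=
    pow_dvd_pow_of_dvd (PowerSeries.X_dvd_iff.mpr hf0) k
  exact (PowerSeries.X_pow_dvd_iff.mp hdvd) a ha

-- lemma A
lemma coeff_pow_mem {R : Type*} [CommRing R] (T : Set ℕ)
    (hpos : ∀ t ∈ T, 0 < t) (hsc : ∀ s ∈ T, ∀ t ∈ T, s + t - 1 ∈ T)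
    (f : PowerSeries R) (hf : Supported T f) :
    ∀ k, 1 ≤ k → ∀ n, PowerSeries.coeff n (f ^ k) ≠ 0 → ∃ m ∈ T, n = m + (k - 1) := by
  intro k
  induction k with
  | zero => omega
  | succ k ih =>
    intro _ n hn
    rcases Nat.eq_zero_or_pos k with rfl | hk
    · simp only [zero_add, pow_one] at hn
      exact ⟨n, hf n hn, by omega⟩
    · rw [pow_succ, PowerSeries.coeff_mul] at hn
      obtain ⟨p, hp, hne⟩ := Finset.exists_ne_zero_of_sum_ne_zero hn
      have h1 : PowerSeries.coeff p.1 (f ^ k) ≠ 0 := fun h => hne (by rw [h, zero_mul])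
      have h2 : PowerSeries.coeff p.2 f ≠ 0 := fun h => hne (by rw [h, mul_zero])
      obtain ⟨m, hm, hpm⟩ := ih hk p.1 h1
      have hb : p.2 ∈ T := hf p.2 h2
      refine ⟨m + p.2 - 1, hsc m hm p.2 hb, ?_⟩
      have hb1 : 0 < p.2 := hpos p.2 hb
      have : p.1 + p.2 = n := Finset.HasAntidiagonal.mem_antidiagonal.mp hp
      omega

lemma coeff_pow_self {R : Type*} [CommRing R] (f : PowerSeries R)
    (hf0 : PowerSeries.constantCoeff f = 0) :
    ∀ k, PowerSeries.coeff k (f ^ k) = (PowerSeries.coeff 1 f) ^ k := by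
  intro k
  induction k with
  | zero => simp
  | succ k ih =>
    rw [pow_succ, PowerSeries.coeff_mul]
    rw [Finset.sum_eq_single (k, 1)]
    · rw [ih, pow_succ]
    · rintro ⟨a, b⟩ hab hne
      have hab' : a + b = k + 1 := Finset.HasAntidiagonal.mem_antidiagonal.mp hab
      rcases lt_trichotomy a k with h | h | h
      · rw [coeff_pow_lt_zero f hf0 k a h, zero_mul]
      · exfalso; apply hne; subst h; simp at hab' ⊢; omega
      · have : b = 0 := by omega
        subst this
        rw [PowerSeries.coeff_zero_eq_constantCoeff, hf0, mul_zero]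
    · intro h
      exfalso; exact h (Finset.HasAntidiagonal.mem_antidiagonal.mpr rfl)

theorem stmt16 {R : Type*} [CommRing R] (T : Set ℕ) (hpos : ∀ t ∈ T, 0 < t)
    (h1 : 1 ∈ T) (hsc : ∀ s ∈ T, ∀ t ∈ T, s + t - 1 ∈ T)
    (f g : PowerSeries R) (hf : Supported T f)
    (hf0 : PowerSeries.constantCoeff f = 0) (hfu : IsUnit (PowerSeries.coeff 1 f))
    (hg0 : PowerSeries.constantCoeff g = 0)
    (hfg : comp f g = PowerSeries.X) (hgf : comp g f = PowerSeries.X) :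
    Supported T g := by
  intro n
  induction n using Nat.strong_induction_on with
  | _ n ih =>
  intro hn
  by_contra hnT
  have hn0 : n ≠ 0 := by
    rintro rfl
    rw [PowerSeries.coeff_zero_eq_constantCoeff, hg0] at hn
    exact hn rfl
  have hn1 : n ≠ 1 := fun h => hnT (h ▸ h1)
  have hX : PowerSeries.coeff n (comp g f) = 0 := by
    rw [hgf, PowerSeries.coeff_X, if_neg hn1]
  rw [comp, PowerSeries.coeff_mk] at hX
  have hzero : ∀ k ∈ Finset.range n, PowerSeries.coeff k g * PowerSeries.coeff n (f ^ k) = 0 := by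
    intro k hk
    have hkn : k < n := Finset.mem_range.mp hk
    rcases Nat.eq_zero_or_pos k with rfl | hk1
    · rw [PowerSeries.coeff_zero_eq_constantCoeff, hg0, zero_mul]
    by_cases hgk : PowerSeries.coeff k g = 0
    · rw [hgk, zero_mul]
    by_cases hfk : PowerSeries.coeff n (f ^ k) = 0
    · rw [hfk, mul_zero]
    exfalso
    have hkT : k ∈ T := ih k hkn hgk
    obtain ⟨m, hm, hnm⟩ := coeff_pow_mem T hpos hsc f hf k hk1 n hfk
    have : m + k - 1 ∈ T := hsc m hm k hkT
    have hm1 : 0 < m := hpos m hm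
    have : n ∈ T := by
      have : n = m + k - 1 := by omega
      rwa [this]
    exact hnT this
  rw [Finset.sum_range_succ, Finset.sum_eq_zero hzero, zero_add,
    coeff_pow_self f hf0 n] at hX
  exact hn ((hfu.pow n).mul_left_eq_zero.mp hX)
end

section
/- Let T ⊆ ℕ*. If for every ring R the set of compositionally invertible elements of R[[x^T]] is closed under composition (forms a group with identity x), then T is strongly closed: 1 ∈ T and s + t − 1 ∈ T for all s, t ∈ T. In particular, it suffices that over ℤ the composition (x + x^s)∘(x + x^t) lies in ℤ[[x^T]] for all s, t ∈ T. -/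
open PowerSeries

lemma coeffpow (t s n : ℕ) :
    coeff (R := ℤ) n ((X + X^t)^s) =
      ∑ k ∈ Finset.range (s+1), if k + t*(s-k) = n then (s.choose k : ℤ) else 0 := by
  rw [add_pow, map_sum]
  apply Finset.sum_congr rfl
  intro k hk
  rw [← pow_mul, ← pow_add,
    show ((s.choose k : PowerSeries ℤ)) = C ((s.choose k : ℤ)) by simp,
    coeff_mul_C, coeff_X_pow, ite_mul, one_mul, zero_mul]
  exact if_congr eq_comm rfl rfl

lemma key (s t : ℕ) (hs : 2 ≤ s) (ht : 2 ≤ t) :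
    coeff (R := ℤ) (s+t-1) ((X + X^t)^s) = s := by
  rw [coeffpow]
  rw [Finset.sum_eq_single_of_mem (s-1)]
  · rw [show s - (s-1) = 1 by omega, if_pos (by omega), Nat.choose_symm (by omega), Nat.choose_one_right]
  · simp
  · intro k hk hne
    rw [if_neg]
    intro heq
    apply hne
    simp only [Finset.mem_range] at hk
    rcases Nat.lt_or_ge k s with hlt | hge
    · obtain ⟨d, hd⟩ := Nat.exists_eq_add_of_lt hlt
      subst hd
      rw [show k+d+1-k = d+1 by omega, Nat.mul_add, Nat.mul_one] at heq
      have h3 : 2*d ≤ t*d := Nat.mul_le_mul_right d ht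
      omega
    · rw [show s - k = 0 by omega] at heq
      omega

theorem stmt17 (T : Set ℕ) (hpos : ∀ t ∈ T, 0 < t)
    (h : ∀ (R : Type) [CommRing R],
      Supported (R := R) T PowerSeries.X ∧
      ∀ f g : PowerSeries R, Supported T f → Supported T g →
        PowerSeries.constantCoeff f = 0 → PowerSeries.constantCoeff g = 0 →
        IsUnit (PowerSeries.coeff 1 f) → IsUnit (PowerSeries.coeff 1 g) →
        Supported T (comp f g)) :
    1 ∈ T ∧ ∀ s ∈ T, ∀ t ∈ T, s + t - 1 ∈ T := by
  obtain ⟨hX, hcomp⟩ := h ℤ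
  have h1T : (1 : ℕ) ∈ T := hX 1 (by simp)
  refine ⟨h1T, fun s hs t ht => ?_⟩
  rcases eq_or_lt_of_le (Nat.succ_le_of_lt (hpos s hs)) with hs1 | hs2
  · rwa [show s + t - 1 = t by omega]
  rcases eq_or_lt_of_le (Nat.succ_le_of_lt (hpos t ht)) with ht1 | ht2
  · rwa [show s + t - 1 = s by omega]
  set f : PowerSeries ℤ := X + X ^ s with hf
  set g : PowerSeries ℤ := X + X ^ t with hg
  have hsupp : ∀ u : ℕ, u ∈ T → Supported T (X + X ^ u : PowerSeries ℤ) := by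
    intro u hu n hn
    have : n = 1 ∨ n = u := by
      by_contra hc
      push_neg at hc
      apply hn
      simp [coeff_X, coeff_X_pow, hc.1, hc.2]
    rcases this with rfl | rfl
    · exact h1T
    · exact hu
  have hconst : ∀ u : ℕ, 0 < u → constantCoeff (X + X ^ u : PowerSeries ℤ) = 0 := by
    intro u hu
    simp [map_pow, constantCoeff_X, zero_pow (by omega : u ≠ 0)]
  have hunit : ∀ u : ℕ, 2 ≤ u → IsUnit (coeff 1 (X + X ^ u : PowerSeries ℤ)) := by
    intro u hu
    simp only [map_add, coeff_one_X, coeff_X_pow]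
    rw [if_neg (by omega), add_zero]
    exact isUnit_one
  have hS := hcomp f g (hsupp s hs) (hsupp t ht) (hconst s (by omega)) (hconst t (by omega))
    (hunit s hs2) (hunit t ht2)
  apply hS (s + t - 1)
  have hcf : ∀ k, coeff k f = (if k = 1 then 1 else 0) + (if k = s then 1 else 0) := by
    intro k
    simp [hf, coeff_X, coeff_X_pow]
  rw [comp, coeff_mk]
  simp_rw [hcf, add_mul, Finset.sum_add_distrib, ite_mul, one_mul, zero_mul,
    Finset.sum_ite_eq']
  rw [if_pos (by simp [Finset.mem_range]; omega), if_pos (by simp [Finset.mem_range]; omega),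
    pow_one, key s t (by omega) (by omega)]
  have : coeff (s + t - 1) g = 0 := by
    simp only [hg, map_add, coeff_X, coeff_X_pow]
    rw [if_neg (by omega), if_neg (by omega), add_zero]
  rw [this, zero_add]
  exact_mod_cast (by omega : (s : ℤ) ≠ 0)
end
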